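/- arXiv:1901.03555 — 2 statements merged into one kernel-verified Lean document; each statement's English description precedes it below -/
import Mathlib

section
/- If V is a finite-dimensional vector space over a division ring F, then the endomorphism ring End(V) is unit regular: every endomorphism φ satisfies φ ∘ u ∘ φ = φ for some invertible endomorphism u. -/
/-!
Choose complements `W` of `ker φ` and `C` of `range φ`. Then `φ` maps `W` isomorphically onto
`range φ`, and `C ≃ ker φ` because both have dimension `dim V - rank φ`. The automorphism that
inverts `φ|_W` on `range φ` and maps `C` isomorphically onto `ker φ` satisfies `φ u φ = φ`.
-/

namespace LinearMap

variable {R M N : Type*} [Ring R] [AddCommGroup M] [Module R M] [AddCommGroup N] [Module R N]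

noncomputable def rangeEquivOfIsComplKer (f : M →ₗ[R] N) {W : Submodule R M}
    (hW : IsCompl (ker f) W) : range f ≃ₗ[R] W :=
  f.quotKerEquivRange.symm.trans (Submodule.quotientEquivOfIsCompl _ W hW)

theorem apply_rangeEquivOfIsComplKer (f : M →ₗ[R] N) {W : Submodule R M}
    (hW : IsCompl (ker f) W) (y : range f) : f (f.rangeEquivOfIsComplKer hW y) = y := by
  rw [← quotKerEquivRange_apply_mk, rangeEquivOfIsComplKer, LinearEquiv.trans_apply,
    Submodule.mk_quotientEquivOfIsCompl_apply, LinearEquiv.apply_symm_apply]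

theorem exists_linearEquiv_comp_comp_eq_self_of_isCompl (f : M →ₗ[R] N) {W : Submodule R M}
    {C : Submodule R N} (hW : IsCompl (ker f) W) (hC : IsCompl (range f) C)
    (eC : C ≃ₗ[R] ker f) : ∃ g : N ≃ₗ[R] M, f ∘ₗ g.toLinearMap ∘ₗ f = f := by
  let g := (Submodule.prodEquivOfIsCompl _ _ hC).symm ≪≫ₗ
    ((f.rangeEquivOfIsComplKer hW).prodCongr eC) ≪≫ₗ Submodule.prodEquivOfIsCompl _ _ hW.symm
  refine ⟨g, LinearMap.ext fun x => ?_⟩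
  have hgf : g (f x) = f.rangeEquivOfIsComplKer hW ⟨f x, mem_range_self f x⟩ := by
    simp [g, Submodule.prodEquivOfIsCompl_symm_apply_left _ _ hC ⟨f x, mem_range_self f x⟩]
  simp only [comp_apply, LinearEquiv.coe_coe, hgf, apply_rangeEquivOfIsComplKer]

theorem exists_linearEquiv_comp_comp_eq_self {K V V' : Type*} [DivisionRing K] [AddCommGroup V]
    [Module K V] [AddCommGroup V'] [Module K V'] [FiniteDimensional K V] [FiniteDimensional K V']
    (f : V →ₗ[K] V') (h : Module.finrank K V = Module.finrank K V') :
    ∃ g : V' ≃ₗ[K] V, f ∘ₗ g.toLinearMap ∘ₗ f = f := by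
  obtain ⟨W, hW⟩ := Submodule.exists_isCompl (ker f)
  obtain ⟨C, hC⟩ := Submodule.exists_isCompl (range f)
  have hC_ker : Module.finrank K C = Module.finrank K (ker f) := by
    have hV' := Submodule.finrank_add_eq_of_isCompl hC
    have hV := f.finrank_range_add_finrank_ker
    omega
  exact f.exists_linearEquiv_comp_comp_eq_self_of_isCompl hW hC (.ofFinrankEq _ _ hC_ker)

end LinearMap

/-- The endomorphism ring of a finite-dimensional vector space over a division
ring is unit regular. -/
theorem end_unit_regular (F V : Type*) [DivisionRing F] [AddCommGroup V] [Module F V]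
    [FiniteDimensional F V] :
    ∀ φ : Module.End F V, ∃ u : (Module.End F V)ˣ, φ * (u : Module.End F V) * φ = φ := by
  intro φ
  obtain ⟨g, hg⟩ := φ.exists_linearEquiv_comp_comp_eq_self rfl
  exact ⟨LinearMap.GeneralLinearGroup.ofLinearEquiv g, hg⟩
end

section
/- Let R be a *-regular ring, i.e., a von Neumann regular *-ring in which x·x* = 0 implies x = 0. Then R is finite as a *-ring: r·r* = 1 implies r*·r = 1. -/
/-- Every `*`-regular ring is finite as a `*`-ring: `r * r* = 1` implies
`r* * r = 1`. -/
theorem star_regular_star_finite (R : Type*) [Ring R] [StarRing R]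
    (hreg : ∀ a : R, ∃ x : R, a * x * a = a)
    (hproper : ∀ x : R, x * star x = 0 → x = 0)
    (r : R) (h : r * star r = 1) : star r * r = 1 := by
  set p : R := 1 - star r * r with hp
  have hrp : r * p = 0 := by
    rw [hp, mul_sub, mul_one, ← mul_assoc, h, one_mul, sub_self]
  have hstarp : star p = p := by
    rw [hp]
    simp [star_sub, star_mul, star_star]
  have hpp : p * p = p := by
    have h1 : p * p = p - star r * (r * p) := by
      rw [hp]; noncomm_ring
    rw [h1, hrp, mul_zero, sub_zero]
  have key : ∀ δ : R, δ = r * δ → p * δ = 0 := by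
    intro δ hδ
    have h1 : star (p * δ) * star (star (p * δ)) = 0 := by
      rw [star_star]
      have e1 : star (p * δ) * (p * δ) = star δ * δ - star (r * δ) * (r * δ) := by
        rw [star_mul, hstarp]
        calc star δ * p * (p * δ) = star δ * (p * δ) := by
              rw [mul_assoc, ← mul_assoc p, hpp]
          _ = star δ * δ - star δ * star r * (r * δ) := by rw [hp]; noncomm_ring
          _ = star δ * δ - star (r * δ) * (r * δ) := by rw [star_mul]
      rw [e1, ← hδ, sub_self]
    have h2 := hproper _ h1
    calc p * δ = star (star (p * δ)) := (star_star _).symm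
      _ = 0 := by rw [h2, star_zero]
  obtain ⟨w, hw⟩ := hreg (1 - r)
  set D : R := 1 - w * (1 - r) with hD
  have hDr : D = r * D := by
    have h2 : (1 - r) * D = 0 := by
      rw [hD, mul_sub, mul_one, ← mul_assoc, hw, sub_self]
    have h3 : (1 - r) * D = D - r * D := by noncomm_ring
    rw [h3] at h2
    exact sub_eq_zero.mp h2
  have hpD : p * D = 0 := key D hDr
  have hpc : p = p * w * (1 - r) := by
    have h4 : p * (w * (1 - r)) + p * D = p := by
      rw [hD]; noncomm_ring
    rw [hpD, add_zero, ← mul_assoc] at h4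
    exact h4.symm
  have hpr : p * star r = 0 := by
    rw [hp, sub_mul, one_mul, mul_assoc, h, mul_one, sub_self]
  have hcr : p * w * star r = p * w := by
    have h5 : p * star r = p * w * ((1 - r) * star r) := by
      conv_lhs => rw [hpc]
      rw [mul_assoc]
    rw [hpr] at h5
    have h6 : (1 - r) * star r = star r - 1 := by
      rw [sub_mul, one_mul, h]
    rw [h6, mul_sub, mul_one] at h5
    exact sub_eq_zero.mp h5.symm
  have hrc : star (p * w) = r * star (p * w) := by
    conv_lhs => rw [← hcr]
    rw [star_mul, star_star]
  have hpsc : p * star (p * w) = 0 := key _ hrc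
  have hcp : p * w * p = 0 := by
    have h7 := congrArg star hpsc
    rwa [star_mul, star_star, hstarp, star_zero] at h7
  have hp0 : p = 0 := by
    have h9 : (1 - r) * p = p := by
      rw [sub_mul, one_mul, hrp, sub_zero]
    calc p = p * p := hpp.symm
      _ = p * w * (1 - r) * p := by rw [← hpc]
      _ = p * w * ((1 - r) * p) := by rw [mul_assoc]
      _ = p * w * p := by rw [h9]
      _ = 0 := hcp
  rw [hp] at hp0
  exact (sub_eq_zero.mp hp0).symm
end
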